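/- Let (𝒜,T) be a crystallographic Tits arrangement with respect to R and let K be a chamber. Then the Cartan matrix C^K at K is a generalized Cartan matrix: its diagonal entries equal 2, its off-diagonal entries are non-positive integers, and if the (i,j)-entry is 0 for i ≠ j then so is the (j,i)-entry. -/

import Mathlib

open Set

noncomputable section

section Arrangements

variable {V : Type*} [AddCommGroup V] [Module ℝ V] [TopologicalSpace V]

/-- The kernel of a linear functional, as a subset of `V`. -/
def dualKer (α : Module.Dual ℝ V) : Set V := {v | α v = 0}

/-- A linear hyperplane: the kernel of a nonzero linear functional. -/
def IsLinearHyperplane (H : Set V) : Prop :=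
  ∃ α : Module.Dual ℝ V, α ≠ 0 ∧ H = dualKer α

/-- A hyperplane arrangement `(𝒜, T)`: `T` is an open convex cone, `𝒜` a set of linear
hyperplanes, each meeting `T`, which is locally finite in `T`. -/
structure IsHyperplaneArrangement (𝒜 : Set (Set V)) (T : Set V) : Prop where
  T_nonempty : T.Nonempty
  T_open : IsOpen T
  T_convex : Convex ℝ T
  T_cone : ∀ x ∈ T, ∀ c : ℝ, 0 < c → c • x ∈ T
  hyperplanes : ∀ H ∈ 𝒜, IsLinearHyperplane H
  meets : ∀ H ∈ 𝒜, (H ∩ T).Nonempty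
  locallyFinite : ∀ x ∈ T, ∃ U : Set V, IsOpen U ∧ x ∈ U ∧ U ⊆ T ∧
    {H ∈ 𝒜 | (H ∩ U).Nonempty}.Finite

/-- The chambers: connected components of `T \ ⋃ 𝒜`. -/
def chambersOf (𝒜 : Set (Set V)) (T : Set V) : Set (Set V) :=
  {K | ∃ x ∈ T \ ⋃₀ 𝒜, K = connectedComponentIn (T \ ⋃₀ 𝒜) x}

/-- `H` is a wall of the chamber `K`: a hyperplane missing `K` such that
`H ∩ cl(K)` spans `H`. -/
def IsWall (K H : Set V) : Prop :=
  IsLinearHyperplane H ∧ H ∩ K = ∅ ∧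
    (Submodule.span ℝ (H ∩ closure K) : Set V) = H

/-- An open simplicial cone: `⋂_{α ∈ B} α⁻¹(ℝ_{>0})` for a basis `B` of the dual space. -/
def IsOpenSimplicialCone (K : Set V) : Prop :=
  ∃ b : Module.Basis (Fin (Module.finrank ℝ V)) ℝ (Module.Dual ℝ V),
    K = {v | ∀ i, 0 < b i v}

/-- A Tits arrangement: a hyperplane arrangement all of whose chambers are open simplicial
cones (simplicial) and such that every wall of every chamber belongs to `𝒜` (thin). -/
structure IsTitsArrangement (𝒜 : Set (Set V)) (T : Set V) extends
    IsHyperplaneArrangement 𝒜 T : Prop where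
  simplicial : ∀ K ∈ chambersOf 𝒜 T, IsOpenSimplicialCone K
  thin : ∀ K ∈ chambersOf 𝒜 T, ∀ H : Set V, IsWall K H → H ∈ 𝒜

/-- `R` is a root system with associated arrangement `𝒜`: `0 ∉ R`, `R = -R` and
`𝒜 = {ker α | α ∈ R}`. -/
def IsAssociatedRootSystem (𝒜 : Set (Set V)) (R : Set (Module.Dual ℝ V)) : Prop :=
  (0 : Module.Dual ℝ V) ∉ R ∧ (∀ α ∈ R, -α ∈ R) ∧ 𝒜 = {H | ∃ α ∈ R, H = dualKer α}

/-- The root basis `B^K` of a chamber `K`. -/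
def rootBasisOf (R : Set (Module.Dual ℝ V)) (K : Set V) : Set (Module.Dual ℝ V) :=
  {α ∈ R | IsWall K (dualKer α) ∧ ∀ x ∈ K, 0 < α x}

/-- `β` is a non-negative real linear combination of elements of `B`. -/
def InNNRealSpan (B : Set (Module.Dual ℝ V)) (β : Module.Dual ℝ V) : Prop :=
  ∃ (s : Finset (Module.Dual ℝ V)) (c : Module.Dual ℝ V → ℝ),
    ↑s ⊆ B ∧ (∀ α ∈ s, 0 ≤ c α) ∧ β = ∑ α ∈ s, c α • α

/-- `β` is a non-negative integral linear combination of elements of `B`. -/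
def InNatSpan (B : Set (Module.Dual ℝ V)) (β : Module.Dual ℝ V) : Prop :=
  ∃ (s : Finset (Module.Dual ℝ V)) (c : Module.Dual ℝ V → ℕ),
    ↑s ⊆ B ∧ β = ∑ α ∈ s, (c α : ℝ) • α

/-- `β` is an integral linear combination of elements of `B`. -/
def InIntSpan (B : Set (Module.Dual ℝ V)) (β : Module.Dual ℝ V) : Prop :=
  ∃ (s : Finset (Module.Dual ℝ V)) (c : Module.Dual ℝ V → ℤ),
    ↑s ⊆ B ∧ β = ∑ α ∈ s, (c α : ℝ) • α

/-- The crystallographic property: `R ⊆ ±∑_{α ∈ B^K} ℕ₀ α` for every chamber `K`. -/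
def IsCrystallographic (𝒜 : Set (Set V)) (T : Set V) (R : Set (Module.Dual ℝ V)) : Prop :=
  ∀ K ∈ chambersOf 𝒜 T, ∀ β ∈ R,
    InNatSpan (rootBasisOf R K) β ∨ InNatSpan (rootBasisOf R K) (-β)

/-- The chamber complex `𝒮(𝒜,T)`. -/
def chamberComplexOf (𝒜 : Set (Set V)) (T : Set V) : Set (Set V) :=
  {S | ∃ K ∈ chambersOf 𝒜 T, ∃ W : Set (Set V),
    (∀ H ∈ W, IsWall K H) ∧ S = closure K ∩ ⋂₀ W}

/-- `(𝒜,T)` is `k`-spherical: every simplex of the chamber complex of codimension `k`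
meets `T`. -/
def IsKSpherical (𝒜 : Set (Set V)) (T : Set V) (k : ℕ) : Prop :=
  ∀ S ∈ chamberComplexOf 𝒜 T,
    Module.finrank ℝ (Submodule.span ℝ S) = Module.finrank ℝ V - k → (S ∩ T).Nonempty

/-- A reduced root system: `R ∩ ℝα = {±α}` for every `α ∈ R`. -/
def IsReducedRS (R : Set (Module.Dual ℝ V)) : Prop :=
  ∀ α ∈ R, {β ∈ R | ∃ c : ℝ, β = c • α} = {α, -α}

/-- The hyperplane `H` separates `K` and `K'`. -/
def SeparatesH (H K K' : Set V) : Prop :=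
  ∃ α : Module.Dual ℝ V, H = dualKer α ∧ (∀ x ∈ K, 0 < α x) ∧ ∀ x ∈ K', α x < 0

/-- The set `S(K,K')` of hyperplanes of `𝒜` separating `K` and `K'`. -/
def sepSet (𝒜 : Set (Set V)) (K K' : Set V) : Set (Set V) :=
  {H ∈ 𝒜 | SeparatesH H K K'}

/-- The reduction of a set of functionals: the shortest elements on each line. -/
def reducedOf (S : Set (Module.Dual ℝ V)) : Set (Module.Dual ℝ V) :=
  {β ∈ S | ∀ γ ∈ S, ∀ c : ℝ, γ = c • β → 1 ≤ |c|}

end Arrangements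

/-- The standard real vector space `ℝ^r`. -/
abbrev Vr (r : ℕ) : Type := Fin r → ℝ
section CartanGraphs

/-- A generalized Cartan matrix. -/
def IsGCM {I : Type*} (C : Matrix I I ℤ) : Prop :=
  (∀ i, C i i = 2) ∧ (∀ i j, i ≠ j → C i j ≤ 0) ∧
    ∀ i j, i ≠ j → C i j = 0 → C j i = 0

variable {I A : Type*} [Fintype I] [DecidableEq I]

/-- The reflection `σ_i` attached to a generalized Cartan matrix, acting on `ℤ^I`;
on the standard basis it is `σ_i(α_j) = α_j - c_{ij} α_i`. -/
def gcmSigma (C : Matrix I I ℤ) (i : I) : (I → ℤ) → (I → ℤ) :=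
  fun v k => v k - if k = i then ∑ j, C i j * v j else 0

/-- `WeylHom ρ C a b f` : `f` is a morphism from `a` to `b` of the Weyl groupoid of the
Cartan graph `(I, A, ρ, C)`, i.e. a composite of maps `σ_i^c ∈ Hom(c, ρ_i(c))`. -/
inductive WeylHom (ρ : I → A → A) (C : A → Matrix I I ℤ) :
    A → A → ((I → ℤ) → (I → ℤ)) → Prop
  | id (a : A) : WeylHom ρ C a a _root_.id
  | comp {a b : A} {f : (I → ℤ) → (I → ℤ)} (i : I) :
      WeylHom ρ C a b f → WeylHom ρ C a (ρ i b) (gcmSigma (C b) i ∘ f)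

/-- The axioms of a Cartan graph: `A` nonempty, all `C^a` generalized Cartan matrices,
(C1) each `ρ_i` an involution, (C2) `c^a_{ij} = c^{ρ_i(a)}_{ij}`. -/
def IsCartanGraph (ρ : I → A → A) (C : A → Matrix I I ℤ) : Prop :=
  Nonempty A ∧ (∀ a, IsGCM (C a)) ∧ (∀ i, Function.Involutive (ρ i)) ∧
    ∀ a i j, C a i j = C (ρ i a) i j

/-- Connectedness: all Hom-sets of the Weyl groupoid are nonempty. -/
def CGConnected (ρ : I → A → A) (C : A → Matrix I I ℤ) : Prop :=
  ∀ a b : A, ∃ f, WeylHom ρ C a b f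

/-- Simple connectedness: `Hom(a,a) = {id}` for every object `a`. -/
def CGSimplyConnected (ρ : I → A → A) (C : A → Matrix I I ℤ) : Prop :=
  ∀ (a : A) (f : (I → ℤ) → (I → ℤ)), WeylHom ρ C a a f → f = _root_.id

/-- The set of real roots at `a`: all images of standard basis vectors under morphisms
into `a`. -/
def realRootsAt (ρ : I → A → A) (C : A → Matrix I I ℤ) (a : A) : Set (I → ℤ) :=
  {v | ∃ (b : A) (f : (I → ℤ) → (I → ℤ)) (j : I), WeylHom ρ C b a f ∧ v = f (Pi.single j 1)}

/-- A root system of type `𝒞 = (I, A, ρ, C)`: axioms (R1)-(R4). -/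
def IsRootSystemOfType (ρ : I → A → A) (C : A → Matrix I I ℤ)
    (R : A → Set (I → ℤ)) : Prop :=
  (∀ a, R a = {v ∈ R a | ∀ i, 0 ≤ v i} ∪ (fun v => -v) '' {v ∈ R a | ∀ i, 0 ≤ v i}) ∧
  (∀ (a : A) (i : I), {v ∈ R a | ∃ n : ℤ, v = n • Pi.single i 1} =
      {Pi.single i 1, -Pi.single i 1}) ∧
  (∀ (a : A) (i : I), gcmSigma (C a) i '' R a = R (ρ i a)) ∧
  ∀ (a : A) (i j : I), i ≠ j →
    {v ∈ R a | ∃ m n : ℕ, v = (m : ℤ) • Pi.single i 1 + (n : ℤ) • Pi.single j 1}.Finite →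
    (ρ i ∘ ρ j)^[{v ∈ R a |
        ∃ m n : ℕ, v = (m : ℤ) • Pi.single i 1 + (n : ℤ) • Pi.single j 1}.ncard] a = a

end CartanGraphs

/-! Since a chamber `K` is an open simplicial cone `{v | ∀ m, 0 < b m v}`, every root of `B^K`
is a positive multiple of some `b m`, and thinness puts a root of `B^K` on every wall `ker (b m)`;
counting then shows that `B^K` is a basis of `V*`. The crystallographic property now says that
the coordinates of a root with respect to `B^K` are either all `≥ 0` or all `≤ 0`. Applied to
`β i j = -C i j • α i + α j` this gives `C i j ≤ 0`. If `C i j = 0`, then `β i j = α j`, so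
`β j i = -β i i - C j i • β i j` in the basis `B^{K^i}`, which forces `C j i ≥ 0`. Finally
`β i i = -α i` with `α i ≠ 0` gives `C i i = 2`. -/

theorem Module.Dual.exists_eq_smul_of_ker_le {𝕜 V : Type*} [Field 𝕜] [AddCommGroup V]
    [Module 𝕜 V] {f g : Module.Dual 𝕜 V} (h : LinearMap.ker f ≤ LinearMap.ker g) :
    ∃ c : 𝕜, g = c • f := by
  have := mem_span_of_iInf_ker_le_ker (ι := Unit) (L := fun _ => f) (by simpa using h)
  rw [range_const, Submodule.mem_span_singleton] at this
  obtain ⟨c, hc⟩ := this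
  exact ⟨c, hc.symm⟩

theorem dualKer_smul {V : Type*} [AddCommGroup V] [Module ℝ V] {c : ℝ} (hc : c ≠ 0)
    (f : Module.Dual ℝ V) : dualKer (c • f) = dualKer f := by
  ext v; simp [dualKer, hc]

namespace Module.Basis

section Algebraic

variable {V ι : Type*} [AddCommGroup V] [Module ℝ V] [FiniteDimensional ℝ V] [Fintype ι]
  [DecidableEq ι]

def predualBasis (b : Basis ι ℝ (Module.Dual ℝ V)) : Basis ι ℝ V :=
  b.dualBasis.map (Module.evalEquiv ℝ V).symm

variable (b : Basis ι ℝ (Module.Dual ℝ V))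

@[simp]
theorem predualBasis_repr (v : V) (i : ι) : b.predualBasis.repr v i = b i v := by
  simp [predualBasis]

@[simp]
theorem apply_predualBasis_self (i : ι) : b i (b.predualBasis i) = 1 := by
  rw [← predualBasis_repr, repr_self, Finsupp.single_eq_same]

theorem apply_predualBasis_of_ne {i j : ι} (h : j ≠ i) : b i (b.predualBasis j) = 0 := by
  rw [← predualBasis_repr, repr_self, Finsupp.single_eq_of_ne h.symm]

theorem sum_predualBasis_mem : ∑ j, b.predualBasis j ∈ {v : V | ∀ i, 0 < b i v} := by
  intro i
  rw [map_sum, Finset.sum_eq_single i (fun j _ h => b.apply_predualBasis_of_ne h) (by simp)]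
  simp

theorem sum_apply_predualBasis_smul (v : V) : ∑ j, b j v • b.predualBasis j = v := by
  simpa using b.predualBasis.sum_repr v

theorem sum_apply_predualBasis_smul_dual (γ : Module.Dual ℝ V) :
    ∑ j, γ (b.predualBasis j) • b j = γ := by
  ext v
  conv_rhs => rw [← b.sum_apply_predualBasis_smul v]
  simp [mul_comm]

end Algebraic

section Topological

variable {V ι : Type*} [AddCommGroup V] [Module ℝ V] [FiniteDimensional ℝ V] [Fintype ι]
  [DecidableEq ι]
  [TopologicalSpace V] [IsTopologicalAddGroup V] [ContinuousSMul ℝ V] [T2Space V]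
  (b : Basis ι ℝ (Module.Dual ℝ V))

theorem closure_setOf_forall_pos :
    closure {v : V | ∀ i, 0 < b i v} = {v | ∀ i, 0 ≤ b i v} := by
  let φ := b.predualBasis.equivFun.toContinuousLinearEquiv.toHomeomorph
  have hφ (s : ι → Set ℝ) : {v : V | ∀ i, b i v ∈ s i} = φ ⁻¹' univ.pi s := by
    ext v; simp [φ]
  have := φ.preimage_closure (univ.pi fun _ => Ioi 0)
  rw [closure_pi_set, ← hφ, ← hφ] at this
  simpa using this.symm

theorem predualBasis_mem_closure (j : ι) :
    b.predualBasis j ∈ closure {v : V | ∀ i, 0 < b i v} := by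
  rw [closure_setOf_forall_pos]
  intro i
  rcases eq_or_ne j i with rfl | h
  · simp
  · rw [b.apply_predualBasis_of_ne h]

theorem isWall_dualKer (i : ι) : IsWall {v : V | ∀ i, 0 < b i v} (dualKer (b i)) := by
  refine ⟨⟨b i, b.ne_zero i, rfl⟩, ?_, ?_⟩
  · exact eq_empty_of_forall_notMem fun v ⟨hv, hK⟩ => (hK i).ne' hv
  · refine subset_antisymm (fun v hv => ?_) fun v hv => ?_
    · exact (Submodule.span_le (p := LinearMap.ker (b i)).2 fun x hx => hx.1) hv
    · rw [← b.sum_apply_predualBasis_smul v]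
      refine Submodule.sum_mem _ fun j _ => ?_
      rcases eq_or_ne j i with rfl | h
      · simp [show b j v = 0 from hv]
      · exact Submodule.smul_mem _ _ <| Submodule.subset_span
          ⟨b.apply_predualBasis_of_ne h, b.predualBasis_mem_closure j⟩

theorem exists_pos_smul_eq_of_isWall {γ : Module.Dual ℝ V}
    (hpos : ∀ v ∈ {v : V | ∀ i, 0 < b i v}, 0 < γ v)
    (hwall : IsWall {v : V | ∀ i, 0 < b i v} (dualKer γ)) :
    ∃ m, ∃ d : ℝ, 0 < d ∧ γ = d • b m := by
  set K := {v : V | ∀ i, 0 < b i v}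
  set e := b.predualBasis
  have hγcl : ∀ v ∈ closure K, 0 ≤ γ v := fun v hv =>
    (isClosed_le continuous_const γ.continuous_of_finiteDimensional).closure_subset_iff.2
      (fun w hw => (hpos w hw).le) hv
  have hγ : γ = ∑ j, γ (e j) • b j := (b.sum_apply_predualBasis_smul_dual γ).symm
  obtain ⟨m, hm⟩ : ∃ m, 0 < γ (e m) := by
    by_contra! h
    have hγ0 : γ = 0 := by
      rw [hγ]
      exact Finset.sum_eq_zero fun j _ => by
        rw [le_antisymm (h j) (hγcl _ (b.predualBasis_mem_closure j)), zero_smul]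
    simpa [hγ0] using hpos _ (b.sum_predualBasis_mem)
  have hker : LinearMap.ker γ ≤ LinearMap.ker (b m) := by
    intro v (hv : v ∈ dualKer γ)
    rw [← hwall.2.2] at hv
    refine (Submodule.span_le (p := LinearMap.ker (b m)).2 ?_) hv
    rintro w ⟨hw, hwK⟩
    rw [b.closure_setOf_forall_pos] at hwK
    have hsum : ∑ j, γ (e j) * b j w = 0 := by
      simpa [smul_eq_mul] using congr($hγ w).symm.trans hw
    have := (Finset.sum_eq_zero_iff_of_nonneg fun j _ =>
      mul_nonneg (hγcl _ (b.predualBasis_mem_closure j)) (hwK j)).1 hsum m (Finset.mem_univ m)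
    exact (mul_eq_zero.1 this).resolve_left hm.ne'
  obtain ⟨c, hc⟩ := Module.Dual.exists_eq_smul_of_ker_le hker
  have : 1 = c * γ (e m) := by simpa [e] using congr($hc (e m))
  refine ⟨m, γ (e m), hm, ?_⟩
  rw [hc, smul_smul, mul_comm, ← this, one_smul]

end Topological

end Module.Basis

theorem Module.Basis.repr_nonneg_of_inNatSpan {V ι : Type*} [AddCommGroup V] [Module ℝ V]
    (b : Module.Basis ι ℝ (Module.Dual ℝ V)) {δ : Module.Dual ℝ V}
    (h : InNatSpan (range b) δ) (k : ι) : 0 ≤ b.repr δ k := by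
  obtain ⟨s, c, hs, rfl⟩ := h
  simp only [map_sum, map_smul, Finsupp.coe_finsetSum, Finsupp.coe_smul, Finset.sum_apply,
    Pi.smul_apply, smul_eq_mul]
  refine Finset.sum_nonneg fun γ hγ => mul_nonneg (Nat.cast_nonneg _) ?_
  obtain ⟨j, rfl⟩ := hs hγ
  rw [b.repr_self]
  exact Finsupp.single_nonneg.2 zero_le_one k

theorem IsCrystallographic.nonneg_or_nonpos_of_smul_add_smul_mem {V ι : Type*} [AddCommGroup V]
    [Module ℝ V] [TopologicalSpace V] {𝒜 : Set (Set V)} {T : Set V} {R : Set (Module.Dual ℝ V)}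
    (hcrys : IsCrystallographic 𝒜 T R) {K : Set V} (hK : K ∈ chambersOf 𝒜 T)
    (b : Module.Basis ι ℝ (Module.Dual ℝ V)) (hb : range b = rootBasisOf R K)
    {i j : ι} (hij : i ≠ j) {a c : ℝ} (h : a • b i + c • b j ∈ R) :
    (0 ≤ a ∧ 0 ≤ c) ∨ (a ≤ 0 ∧ c ≤ 0) := by
  have coords {δ} (hδ : InNatSpan (range b) δ) : 0 ≤ b.repr δ i ∧ 0 ≤ b.repr δ j :=
    ⟨b.repr_nonneg_of_inNatSpan hδ i, b.repr_nonneg_of_inNatSpan hδ j⟩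
  rcases hcrys K hK _ h with h | h <;> rw [← hb] at h
  · exact Or.inl (by simpa [hij, hij.symm] using coords h)
  · exact Or.inr (by simpa [hij, hij.symm] using coords h)

section RootBasis

variable {V : Type*} [AddCommGroup V] [Module ℝ V] [TopologicalSpace V] [IsTopologicalAddGroup V]
  [ContinuousSMul ℝ V] [T2Space V] [FiniteDimensional ℝ V]
  {𝒜 : Set (Set V)} {T : Set V} {R : Set (Module.Dual ℝ V)}

theorem IsTitsArrangement.exists_pos_smul_mem_rootBasisOf {ι : Type*} [Fintype ι] [DecidableEq ι]
    (hTits : IsTitsArrangement 𝒜 T) (hR : IsAssociatedRootSystem 𝒜 R)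
    (b : Module.Basis ι ℝ (Module.Dual ℝ V)) (hK : {v | ∀ i, 0 < b i v} ∈ chambersOf 𝒜 T)
    (m : ι) : ∃ c : ℝ, 0 < c ∧ c • b m ∈ rootBasisOf R {v | ∀ i, 0 < b i v} := by
  have hmem : ∀ c : ℝ, 0 < c → c • b m ∈ R → c • b m ∈ rootBasisOf R {v | ∀ i, 0 < b i v} :=
    fun c hc hcR => ⟨hcR, by rw [dualKer_smul hc.ne']; exact b.isWall_dualKer m,
      fun v hv => mul_pos hc (hv m)⟩
  obtain ⟨γ, hγR, hker⟩ : dualKer (b m) ∈ {H | ∃ α ∈ R, H = dualKer α} :=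
    hR.2.2 ▸ hTits.thin _ hK _ (b.isWall_dualKer m)
  obtain ⟨c, rfl⟩ := Module.Dual.exists_eq_smul_of_ker_le (f := b m) (g := γ)
    fun v (hv : v ∈ dualKer (b m)) => show v ∈ dualKer γ from hker ▸ hv
  rcases lt_trichotomy c 0 with hc | rfl | hc
  · exact ⟨-c, neg_pos.2 hc, hmem (-c) (neg_pos.2 hc) 
      (neg_smul c (b m) ▸ hR.2.1 _ hγR)⟩
  · exact absurd (by simpa using hγR) hR.1
  · exact ⟨c, hc, hmem c hc hγR⟩

theorem IsTitsArrangement.linearIndependent_of_range_eq_rootBasisOf {ι : Type*} [Fintype ι]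
    (hTits : IsTitsArrangement 𝒜 T) (hR : IsAssociatedRootSystem 𝒜 R)
    {K : Set V} (hK : K ∈ chambersOf 𝒜 T) {α : ι → Module.Dual ℝ V}
    (hran : range α = rootBasisOf R K) (hcard : Fintype.card ι = Module.finrank ℝ V) :
    LinearIndependent ℝ α := by
  obtain ⟨b, rfl⟩ := hTits.simplicial K hK
  have hαK (k : ι) : α k ∈ rootBasisOf R {v | ∀ i, 0 < b i v} := hran ▸ mem_range_self k
  choose σ d hd hασ using fun k => b.exists_pos_smul_eq_of_isWall (hαK k).2.2 (hαK k).2.1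
  have hσ : Function.Surjective σ := by
    intro m
    obtain ⟨c, hc, hcmem⟩ := hTits.exists_pos_smul_mem_rootBasisOf hR b hK m
    obtain ⟨k, hk⟩ := hran ▸ hcmem
    refine ⟨k, by_contra fun hne => hc.ne' ?_⟩
    have := congr($hk (b.predualBasis m))
    rw [hασ k] at this
    simpa [b.apply_predualBasis_of_ne (Ne.symm hne)] using this.symm
  have hσinj := ((Fintype.bijective_iff_surjective_and_card σ).2 ⟨hσ, by simp [hcard]⟩).1
  convert (b.linearIndependent.comp σ hσinj).units_smul fun k => Units.mk0 (d k) (hd k).ne'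
  ext1 k
  simp [hασ k]

theorem IsTitsArrangement.exists_basis_coe_eq_of_range_eq_rootBasisOf {ι : Type*} [Fintype ι]
    (hTits : IsTitsArrangement 𝒜 T) (hR : IsAssociatedRootSystem 𝒜 R)
    {K : Set V} (hK : K ∈ chambersOf 𝒜 T) {α : ι → Module.Dual ℝ V}
    (hran : range α = rootBasisOf R K) (hcard : Fintype.card ι = Module.finrank ℝ V) :
    ∃ B : Module.Basis ι ℝ (Module.Dual ℝ V), ⇑B = α :=
  ⟨basisOfLinearIndependentOfCardEqFinrank' α
    (hTits.linearIndependent_of_range_eq_rootBasisOf hR hK hran hcard)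
    (hcard.trans Subspace.dual_finrank_eq.symm), by simp⟩

end RootBasis

theorem statement_2_general {r : ℕ} (𝒜 : Set (Set (Vr r))) (T : Set (Vr r))
    (R : Set (Module.Dual ℝ (Vr r)))
    (hTits : IsTitsArrangement 𝒜 T) (hR : IsAssociatedRootSystem 𝒜 R)
    (hcrys : IsCrystallographic 𝒜 T R)
    (K : Set (Vr r)) (hK : K ∈ chambersOf 𝒜 T)
    (α : Fin r → Module.Dual ℝ (Vr r))
    (hαran : Set.range α = rootBasisOf R K)
    (Kadj : Fin r → Set (Vr r)) (hKadj : ∀ i, Kadj i ∈ chambersOf 𝒜 T)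
    (β : Fin r → Fin r → Module.Dual ℝ (Vr r))
    (hβran : ∀ i, Set.range (β i) = rootBasisOf R (Kadj i))
    (hcompat₁ : ∀ i, β i i = -α i)
    (C : Matrix (Fin r) (Fin r) ℤ)
    (hC : ∀ i j, β i j = α j - C i j • α i) :
    IsGCM C := by
  obtain ⟨A, rfl⟩ := hTits.exists_basis_coe_eq_of_range_eq_rootBasisOf hR hK hαran (by simp)
  have hβR (i j : Fin r) : β i j ∈ R :=
    (hβran i ▸ mem_range_self j : β i j ∈ rootBasisOf R (Kadj i)).1
  have hβcoords (i j : Fin r) : β i j = (-(C i j : ℝ)) • A i + (1 : ℝ) • A j := by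
    rw [hC]; module
  have offDiag (i j : Fin r) (hij : i ≠ j) : C i j ≤ 0 := by
    rcases hcrys.nonneg_or_nonpos_of_smul_add_smul_mem hK A hαran hij (hβcoords i j ▸ hβR i j)
      with h | h
    · exact_mod_cast neg_nonneg.1 h.1
    · linarith [h.2]
  refine ⟨fun i => ?_, offDiag, fun i j hij h0 => ?_⟩
  · have h : ((C i i : ℝ) - 2) • A i = 0 := by
      linear_combination (norm := module) (hcompat₁ i).symm.trans (hC i i)
    have := (smul_eq_zero.1 h).resolve_right (A.ne_zero i)
    exact_mod_cast sub_eq_zero.1 this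
  · obtain ⟨B, hB⟩ :=
      hTits.exists_basis_coe_eq_of_range_eq_rootBasisOf hR (hKadj i) (hβran i) (by simp)
    have h : β j i = (-1 : ℝ) • B i + (-(C j i : ℝ)) • B j := by
      rw [hB, hcompat₁, hC j i, hC i j, h0]; module
    rcases hcrys.nonneg_or_nonpos_of_smul_add_smul_mem (hKadj i) B (hB ▸ hβran i) hij
      (h ▸ hβR j i) with h | h
    · norm_num at h
    · exact le_antisymm (offDiag j i hij.symm) (by exact_mod_cast neg_nonpos.1 h.2)

/-- the Cartan matrix at a chamber is a generalized Cartan matrix: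
let `(𝒜,T)` be a crystallographic Tits arrangement with respect to `R`, `K` a chamber
with indexed root basis `α`, and for each `i` let `Kadj i` be the chamber `i`-adjacent
to `K` with compatibly indexed root basis `β i` (so `β i i = -α i` and
`β i j ∈ ⟨α j, α i⟩`).  If `C` is the Cartan matrix at `K`, i.e.
`β i j = α j - C i j • α i` for all `i, j`, then `C` is a generalized Cartan matrix. -/
theorem statement_2 {r : ℕ} (𝒜 : Set (Set (Vr r))) (T : Set (Vr r))
    (R : Set (Module.Dual ℝ (Vr r)))
    (hTits : IsTitsArrangement 𝒜 T) (hR : IsAssociatedRootSystem 𝒜 R)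
    (hcrys : IsCrystallographic 𝒜 T R)
    (K : Set (Vr r)) (hK : K ∈ chambersOf 𝒜 T)
    (α : Fin r → Module.Dual ℝ (Vr r))
    (hαinj : Function.Injective α) (hαran : Set.range α = rootBasisOf R K)
    (Kadj : Fin r → Set (Vr r)) (hKadj : ∀ i, Kadj i ∈ chambersOf 𝒜 T)
    (hKadjne : ∀ i, Kadj i ≠ K)
    (β : Fin r → Fin r → Module.Dual ℝ (Vr r))
    (hβinj : ∀ i, Function.Injective (β i))
    (hβran : ∀ i, Set.range (β i) = rootBasisOf R (Kadj i))
    (hadj : ∀ i, (Submodule.span ℝ (closure K ∩ closure (Kadj i)) : Set (Vr r)) =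
      dualKer (α i))
    (hcompat₁ : ∀ i, β i i = -α i)
    (hcompat₂ : ∀ i j, β i j ∈ Submodule.span ℝ {α j, α i})
    (C : Matrix (Fin r) (Fin r) ℤ)
    (hC : ∀ i j, β i j = α j - C i j • α i) :
    IsGCM C :=
  statement_2_general 𝒜 T R hTits hR hcrys K hK α hαran Kadj hKadj β hβran hcompat₁ C hC
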